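/- arXiv:2502.01544 — 2 statements merged into one kernel-verified Lean document; each statement's English description precedes it below -/
import Mathlib

section
/- Let 𝓑 be a simple expansion set over X, let 𝒞(v₁,v₂) and 𝒞(v₁',v₂') be cubes with nonempty intersection, and let v̂ be a vertex of minimal cardinality in 𝒞(v₁,v₂) ∩ 𝒞(v₁',v₂'), written v̂ = (v₁ − ṽ₂) ∪ ⋃_{b ∈ ṽ₂} Bas(b) = (v₁' − ṽ₂') ∪ ⋃_{b' ∈ ṽ₂'} Bas(b') with ṽ₂ ⊆ v₂ and ṽ₂' ⊆ v₂'. Then ṽ₂ ∩ ṽ₂' = ∅. -/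
structure SimpleExpansionSet (B : Type*) (X : Type*) where
  supp : B → Set X
  supp_nonempty : ∀ b, (supp b).Nonempty
  E : B → Set (Finset B)
  self_mem : ∀ b, ({b} : Finset B) ∈ E b
  proper_unique : ∀ b : B, ∀ u ∈ E b, ∀ w ∈ E b, u ≠ {b} → w ≠ {b} → u = w
  proper_disjoint : ∀ b : B, ∀ v ∈ E b, v ≠ {b} →
    ∀ b₁ ∈ v, ∀ b₂ ∈ v, b₁ ≠ b₂ → Disjoint (supp b₁) (supp b₂)
  proper_supp : ∀ b : B, ∀ v ∈ E b, v ≠ {b} → (⋃ b' ∈ v, supp b') = supp b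
  proper_card : ∀ b : B, ∀ v ∈ E b, v ≠ {b} → 2 ≤ v.card

namespace SimpleExpansionSet

variable {B X : Type*}

/-- A vertex: a finite subset of `𝓑` whose members have pairwise disjoint supports. -/
def IsVertex (S : SimpleExpansionSet B X) (v : Finset B) : Prop :=
  ∀ b₁ ∈ v, ∀ b₂ ∈ v, b₁ ≠ b₂ → Disjoint (S.supp b₁) (S.supp b₂)

/-- The support of a vertex. -/
def vsupp (S : SimpleExpansionSet B X) (v : Finset B) : Set X :=
  ⋃ b ∈ v, S.supp b

/-- `|ℰ(b)| = 2`, i.e. `b` admits a proper expansion. -/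
def HasExpansion (S : SimpleExpansionSet B X) (b : B) : Prop :=
  ∃ u ∈ S.E b, u ≠ {b}

/-- The contraction basin of `b`: the unique member of `ℰ(b) - {{b}}` (when it exists). -/
noncomputable def Bas (S : SimpleExpansionSet B X) (b : B) : Finset B :=
  @dite _ (S.HasExpansion b) (Classical.propDecidable _) (fun h => h.choose) (fun _ => {b})

/-- The restriction `r_b(u) = {b' ∈ u : supp b' ⊆ supp b}`. -/
noncomputable def restrict (S : SimpleExpansionSet B X) (b : B) (u : Finset B) : Finset B :=
  @Finset.filter _ (fun b' => S.supp b' ⊆ S.supp b) (Classical.decPred _) u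

/-- The partial order on `ℰ(b)`: `{b}` is below everything. -/
def Eleq (b : B) (u w : Finset B) : Prop := u = w ∨ u = {b}

/-- The cube `𝒞(v₁, v₂)`, as a set of vertices. -/
noncomputable def cube [DecidableEq B] (S : SimpleExpansionSet B X) (v₁ v₂ : Finset B) :
    Set (Finset B) :=
  { u | ∃ w ⊆ v₂, u = (v₁ \ v₂) ∪ (v₂ \ w) ∪ w.biUnion S.Bas }

/-- One expansion step: replace `b ∈ u` by its contraction basin. -/
def Step [DecidableEq B] (S : SimpleExpansionSet B X) (u v : Finset B) : Prop :=
  ∃ b ∈ u, S.HasExpansion b ∧ v = u.erase b ∪ S.Bas b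

/-- The ascending-path relation `⪯`. -/
def Prec [DecidableEq B] (S : SimpleExpansionSet B X) : Finset B → Finset B → Prop :=
  Relation.ReflTransGen (S.Step)

/-- `u` is joined to `v` by a cubical edge with basin `Bsn` (relative to `v`). -/
def BasinOf [DecidableEq B] (S : SimpleExpansionSet B X) (v u Bsn : Finset B) : Prop :=
  (∃ b ∈ v, S.HasExpansion b ∧ u = v.erase b ∪ S.Bas b ∧ Bsn = {b}) ∨
  (∃ b ∈ u, S.HasExpansion b ∧ v = u.erase b ∪ S.Bas b ∧ Bsn = S.Bas b)

end SimpleExpansionSet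

open SimpleExpansionSet

/-!
If `b ∈ ṽ₂ ∩ ṽ₂'`, then `v̂` contains the basin `Bas b` (of size at least two), and every other
element of `v̂` has support disjoint from `supp b`, so lies outside `Bas b`. Contracting `Bas b`
back to `b` therefore gives `insert b (v̂ \ Bas b)`, which is the vertex of *both* cubes obtained
by not expanding `b`; it is strictly smaller than `v̂`, contradicting minimality.
-/

namespace SimpleExpansionSet

variable {B X : Type*} (S : SimpleExpansionSet B X)

noncomputable def expand [DecidableEq B] (v w : Finset B) : Finset B :=
  (v \ w) ∪ w.biUnion S.Bas

variable {S}

theorem bas_mem_E {b : B} (h : S.HasExpansion b) : S.Bas b ∈ S.E b := by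
  rw [Bas, dif_pos h]
  exact h.choose_spec.1

theorem bas_ne_singleton {b : B} (h : S.HasExpansion b) : S.Bas b ≠ {b} := by
  rw [Bas, dif_pos h]
  exact h.choose_spec.2

theorem two_le_card_bas {b : B} (h : S.HasExpansion b) : 2 ≤ (S.Bas b).card :=
  S.proper_card b _ (bas_mem_E h) (bas_ne_singleton h)

theorem supp_subset_of_mem_bas {b c : B} (h : S.HasExpansion b) (hc : c ∈ S.Bas b) :
    S.supp c ⊆ S.supp b := by
  rw [← S.proper_supp b _ (bas_mem_E h) (bas_ne_singleton h)]
  exact Set.subset_biUnion_of_mem hc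

theorem notMem_bas_of_disjoint {a b : B} (h : S.HasExpansion b)
    (hab : Disjoint (S.supp a) (S.supp b)) : a ∉ S.Bas b := fun ha =>
  (S.supp_nonempty a).ne_empty
    (Set.subset_empty_iff.1 (hab (le_refl _) (supp_subset_of_mem_bas h ha)))

section Expand

variable [DecidableEq B] {v w : Finset B} {b : B}

theorem expand_mem_cube {v₁ v₂ : Finset B} (hsub : v₂ ⊆ v₁) (hw : w ⊆ v₂) :
    S.expand v₁ w ∈ S.cube v₁ v₂ := by
  refine ⟨w, hw, ?_⟩
  ext x
  simp only [expand, Finset.mem_union, Finset.mem_sdiff]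
  have := @hsub x
  have := @hw x
  tauto

theorem bas_subset_expand (hb : b ∈ w) : S.Bas b ⊆ S.expand v w :=
  (Finset.subset_biUnion_of_mem S.Bas hb).trans Finset.subset_union_right

theorem expand_eq_union_bas (hb : b ∈ w) :
    S.expand v w = ((v \ w) ∪ (w.erase b).biUnion S.Bas) ∪ S.Bas b := by
  conv_lhs => rw [expand, ← Finset.insert_erase hb, Finset.biUnion_insert, ← Finset.insert_erase hb]
  ext x
  simp only [Finset.mem_union, Finset.mem_sdiff, Finset.insert_erase hb]
  tauto

theorem disjoint_bas_of_isVertex (hv : S.IsVertex v) (hw : w ⊆ v)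
    (hexp : ∀ c ∈ w, S.HasExpansion c) (hb : b ∈ w) :
    Disjoint ((v \ w) ∪ (w.erase b).biUnion S.Bas) (S.Bas b) := by
  refine Finset.disjoint_left.2 fun a ha => notMem_bas_of_disjoint (hexp b hb) ?_
  rcases Finset.mem_union.1 ha with ha | ha
  · rw [Finset.mem_sdiff] at ha
    exact hv a ha.1 b (hw hb) fun hab => ha.2 (hab ▸ hb)
  · obtain ⟨c, hc, hac⟩ := Finset.mem_biUnion.1 ha
    rw [Finset.mem_erase] at hc
    exact (hv c (hw hc.2) b (hw hb) hc.1).mono_left (supp_subset_of_mem_bas (hexp c hc.2) hac)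

theorem insert_expand_sdiff_bas (hv : S.IsVertex v) (hw : w ⊆ v)
    (hexp : ∀ c ∈ w, S.HasExpansion c) (hb : b ∈ w) :
    insert b (S.expand v w \ S.Bas b) = S.expand v (w.erase b) := by
  rw [expand_eq_union_bas hb, Finset.union_sdiff_cancel_right
    (disjoint_bas_of_isVertex hv hw hexp hb), expand, Finset.sdiff_erase (hw hb),
    Finset.insert_union]

theorem card_insert_expand_sdiff_bas_lt (hexp : ∀ c ∈ w, S.HasExpansion c) (hb : b ∈ w) :
    (insert b (S.expand v w \ S.Bas b)).card < (S.expand v w).card := by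
  have hbas : S.Bas b ⊆ S.expand v w := bas_subset_expand hb
  have := Finset.card_sdiff_of_subset hbas
  have := Finset.card_le_card hbas
  have := Finset.card_insert_le b (S.expand v w \ S.Bas b)
  have := two_le_card_bas (hexp b hb)
  omega

end Expand

end SimpleExpansionSet

theorem minimal_vertex_tildes_disjoint_general {B X : Type*} [DecidableEq B]
    (S : SimpleExpansionSet B X) (v₁ v₂ v₁' v₂' : Finset B)
    (hv₁ : S.IsVertex v₁) (hv₁' : S.IsVertex v₁')
    (hsub : v₂ ⊆ v₁) (hsub' : v₂' ⊆ v₁')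
    (hexp : ∀ b ∈ v₂, S.HasExpansion b) (hexp' : ∀ b ∈ v₂', S.HasExpansion b)
    (vhat tv₂ tv₂' : Finset B)
    (hmin : ∀ u ∈ S.cube v₁ v₂ ∩ S.cube v₁' v₂', vhat.card ≤ u.card)
    (htv : tv₂ ⊆ v₂) (htv' : tv₂' ⊆ v₂')
    (hrep : vhat = (v₁ \ tv₂) ∪ tv₂.biUnion S.Bas)
    (hrep' : vhat = (v₁' \ tv₂') ∪ tv₂'.biUnion S.Bas) :
    tv₂ ∩ tv₂' = ∅ := by
  by_contra hne
  obtain ⟨b, hb⟩ := Finset.nonempty_iff_ne_empty.2 hne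
  obtain ⟨hb₁, hb₂⟩ := Finset.mem_inter.1 hb
  have hexpt : ∀ c ∈ tv₂, S.HasExpansion c := fun c hc => hexp c (htv hc)
  have hexpt' : ∀ c ∈ tv₂', S.HasExpansion c := fun c hc => hexp' c (htv' hc)
  have hmem : insert b (vhat \ S.Bas b) ∈ S.cube v₁ v₂ := by
    rw [hrep, ← expand, insert_expand_sdiff_bas hv₁ (htv.trans hsub) hexpt hb₁]
    exact expand_mem_cube hsub ((Finset.erase_subset _ _).trans htv)
  have hmem' : insert b (vhat \ S.Bas b) ∈ S.cube v₁' v₂' := by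
    rw [hrep', ← expand, insert_expand_sdiff_bas hv₁' (htv'.trans hsub') hexpt' hb₂]
    exact expand_mem_cube hsub' ((Finset.erase_subset _ _).trans htv')
  have hlt : (insert b (vhat \ S.Bas b)).card < vhat.card := by
    rw [hrep, ← expand]
    exact card_insert_expand_sdiff_bas_lt hexpt hb₁
  exact (hmin _ ⟨hmem, hmem'⟩).not_gt hlt

/-- with `v̂` a minimal vertex of the intersection of two cubes, written
`v̂ = (v₁ − ṽ₂) ∪ ⋃ Bas = (v₁' − ṽ₂') ∪ ⋃ Bas`, one has `ṽ₂ ∩ ṽ₂' = ∅`. -/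
theorem minimal_vertex_tildes_disjoint {B X : Type*} [DecidableEq B]
    (S : SimpleExpansionSet B X) (v₁ v₂ v₁' v₂' : Finset B)
    (hv₁ : S.IsVertex v₁) (hv₁' : S.IsVertex v₁')
    (hsub : v₂ ⊆ v₁) (hsub' : v₂' ⊆ v₁')
    (hexp : ∀ b ∈ v₂, S.HasExpansion b) (hexp' : ∀ b ∈ v₂', S.HasExpansion b)
    (vhat tv₂ tv₂' : Finset B)
    (hvhat : vhat ∈ S.cube v₁ v₂ ∩ S.cube v₁' v₂')
    (hmin : ∀ u ∈ S.cube v₁ v₂ ∩ S.cube v₁' v₂', vhat.card ≤ u.card)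
    (htv : tv₂ ⊆ v₂) (htv' : tv₂' ⊆ v₂')
    (hrep : vhat = (v₁ \ tv₂) ∪ tv₂.biUnion S.Bas)
    (hrep' : vhat = (v₁' \ tv₂') ∪ tv₂'.biUnion S.Bas) :
    tv₂ ∩ tv₂' = ∅ :=
  minimal_vertex_tildes_disjoint_general S v₁ v₂ v₁' v₂' hv₁ hv₁' hsub hsub' hexp hexp' vhat tv₂
    tv₂' hmin htv htv' hrep hrep'
end

section
/- (Upward local finiteness) Let 𝓑 be a simple expansion set over X and let v be a full-support vertex of Δ^f_𝓑. Then every full-support vertex u with |u| > |v| that spans a 1-simplex of Δ^f_𝓑 together with v is of the form u = ⋃_{b ∈ v} B_b with B_b ∈ ℰ(b) for each b ∈ v; consequently there are at most 2^{|v|} − 1 such vertices u. -/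
/-!
Since the supports of `v` cover `X` and the members of `u` have pairwise disjoint supports, every
member of `u` lies in the restriction `r_b(u)` for some `b ∈ v`, so `u = ⋃_{b ∈ v} r_b(u)`.
As `ℰ(b)` has at most two members, `r_b(u)` is determined by whether it is `{b}`; hence `u` is
determined by the set of `b ∈ v` with `r_b(u) ≠ {b}`, which is nonempty because `u ≠ v`.
-/

namespace SimpleExpansionSet

variable {B X : Type*} (S : SimpleExpansionSet B X)

lemma mem_restrict {b b' : B} {u : Finset B} :
    b' ∈ S.restrict b u ↔ b' ∈ u ∧ S.supp b' ⊆ S.supp b := by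
  classical
  simp [restrict]

lemma iUnion_supp_eq_of_mem_E {b : B} {w : Finset B} (hw : w ∈ S.E b) :
    ⋃ c ∈ w, S.supp c = S.supp b := by
  by_cases hwb : w = {b}
  · simp [hwb]
  · exact S.proper_supp b w hw hwb

lemma eq_of_mem_E {b : B} {w₁ w₂ : Finset B} (h₁ : w₁ ∈ S.E b) (h₂ : w₂ ∈ S.E b)
    (h : w₁ = {b} ↔ w₂ = {b}) : w₁ = w₂ := by
  by_cases hw₁ : w₁ = {b}
  · rw [hw₁, h.mp hw₁]
  · exact S.proper_unique b w₁ h₁ w₂ h₂ hw₁ (mt h.mpr hw₁)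

lemma mem_restrict_of_mem_supp {u : Finset B} (hu : S.IsVertex u) {b b' : B} {x : X}
    (hr : S.restrict b u ∈ S.E b) (hb' : b' ∈ u) (hxb' : x ∈ S.supp b') (hxb : x ∈ S.supp b) :
    b' ∈ S.restrict b u := by
  rw [← S.iUnion_supp_eq_of_mem_E hr, Set.mem_iUnion₂] at hxb
  obtain ⟨c, hc, hxc⟩ := hxb
  obtain rfl : c = b' := by
    by_contra hne
    exact Set.disjoint_left.mp (hu c (S.mem_restrict.mp hc).1 b' hb' hne) hxc hxb'
  exact hc

variable [DecidableEq B]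

lemma eq_biUnion_restrict {v u : Finset B} (hfull : S.vsupp v = Set.univ) (hu : S.IsVertex u)
    (hr : ∀ b ∈ v, S.restrict b u ∈ S.E b) : u = v.biUnion (S.restrict · u) := by
  ext b'
  rw [Finset.mem_biUnion]
  constructor
  · intro hb'
    obtain ⟨x, hx⟩ := S.supp_nonempty b'
    have hxv : x ∈ S.vsupp v := hfull ▸ Set.mem_univ x
    obtain ⟨b, hb, hxb⟩ := Set.mem_iUnion₂.mp hxv
    exact ⟨b, hb, S.mem_restrict_of_mem_supp hu (hr b hb) hb' hx hxb⟩
  · rintro ⟨b, -, hb'⟩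
    exact (S.mem_restrict.mp hb').1

noncomputable def expandedPart (v u : Finset B) : Finset B :=
  {b ∈ v | S.restrict b u ≠ {b}}

lemma expandedPart_injOn {v : Finset B} (hfull : S.vsupp v = Set.univ) :
    Set.InjOn (S.expandedPart v) {u | S.IsVertex u ∧ ∀ b ∈ v, S.restrict b u ∈ S.E b} := by
  rintro u₁ ⟨hu₁, hr₁⟩ u₂ ⟨hu₂, hr₂⟩ heq
  rw [S.eq_biUnion_restrict hfull hu₁ hr₁, S.eq_biUnion_restrict hfull hu₂ hr₂]
  refine Finset.biUnion_congr rfl fun b hb => S.eq_of_mem_E (hr₁ b hb) (hr₂ b hb) ?_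
  have hmem := congrArg (b ∈ ·) heq
  simp only [expandedPart, Finset.mem_filter, hb, true_and, eq_iff_iff] at hmem
  exact not_iff_not.mp hmem

lemma expandedPart_nonempty {v u : Finset B} (hfull : S.vsupp v = Set.univ)
    (hu : S.IsVertex u) (hr : ∀ b ∈ v, S.restrict b u ∈ S.E b) (hcard : v.card < u.card) :
    (S.expandedPart v u).Nonempty := by
  rw [Finset.nonempty_iff_ne_empty]
  intro hempty
  have hsingle : ∀ b ∈ v, S.restrict b u = {b} := fun b hb => by
    by_contra hne
    have hmem : b ∈ S.expandedPart v u := Finset.mem_filter.mpr ⟨hb, hne⟩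
    simp [hempty] at hmem
  rw [S.eq_biUnion_restrict hfull hu hr, Finset.biUnion_congr rfl hsingle,
    Finset.biUnion_singleton_eq_self] at hcard
  exact hcard.false

end SimpleExpansionSet

open SimpleExpansionSet

theorem upward_locally_finite_general {B X : Type*} [DecidableEq B] (S : SimpleExpansionSet B X)
    (v : Finset B) (hfull : S.vsupp v = Set.univ) :
    (∀ u : Finset B, S.IsVertex u → S.vsupp u = Set.univ → v.card < u.card →
      (∀ b ∈ v, S.restrict b u ∈ S.E b) →
      ∃ Bf : B → Finset B, (∀ b ∈ v, Bf b ∈ S.E b) ∧ u = v.biUnion Bf) ∧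
    {u : Finset B | S.IsVertex u ∧ S.vsupp u = Set.univ ∧ v.card < u.card ∧
      ∀ b ∈ v, S.restrict b u ∈ S.E b}.Finite ∧
    {u : Finset B | S.IsVertex u ∧ S.vsupp u = Set.univ ∧ v.card < u.card ∧
      ∀ b ∈ v, S.restrict b u ∈ S.E b}.ncard ≤ 2 ^ v.card - 1 := by
  set T := {u : Finset B | S.IsVertex u ∧ S.vsupp u = Set.univ ∧ v.card < u.card ∧
      ∀ b ∈ v, S.restrict b u ∈ S.E b}
  have hmaps : Set.MapsTo (S.expandedPart v) T ↑(v.powerset.erase ∅) := by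
    rintro u ⟨hu, -, hcard, hr⟩
    rw [Finset.mem_coe, Finset.mem_erase, Finset.mem_powerset]
    exact ⟨(S.expandedPart_nonempty hfull hu hr hcard).ne_empty, Finset.filter_subset _ _⟩
  have hinj : Set.InjOn (S.expandedPart v) T :=
    (S.expandedPart_injOn hfull).mono fun _ hu => (⟨hu.1, hu.2.2.2⟩ : _ ∧ _)
  refine ⟨fun u hu _ _ hr => ⟨(S.restrict · u), hr, S.eq_biUnion_restrict hfull hu hr⟩,
    Set.Finite.of_injOn hmaps hinj (Finset.finite_toSet _), ?_⟩
  calc T.ncard ≤ (↑(v.powerset.erase ∅) : Set (Finset B)).ncard :=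
        Set.ncard_le_ncard_of_injOn _ hmaps hinj
    _ = 2 ^ v.card - 1 := by
        rw [Set.ncard_coe_finset, Finset.card_erase_of_mem (Finset.empty_mem_powerset v),
          Finset.card_powerset]

/-- Upward local finiteness: every taller neighbour of `v` is a union
`⋃_{b ∈ v} B_b` with `B_b ∈ ℰ(b)`, and there are at most `2^{|v|} − 1` of them. -/
theorem upward_locally_finite {B X : Type*} [DecidableEq B] (S : SimpleExpansionSet B X)
    (v : Finset B) (hv : S.IsVertex v) (hfull : S.vsupp v = Set.univ) :
    (∀ u : Finset B, S.IsVertex u → S.vsupp u = Set.univ → v.card < u.card →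
      (∀ b ∈ v, S.restrict b u ∈ S.E b) →
      ∃ Bf : B → Finset B, (∀ b ∈ v, Bf b ∈ S.E b) ∧ u = v.biUnion Bf) ∧
    {u : Finset B | S.IsVertex u ∧ S.vsupp u = Set.univ ∧ v.card < u.card ∧
      ∀ b ∈ v, S.restrict b u ∈ S.E b}.Finite ∧
    {u : Finset B | S.IsVertex u ∧ S.vsupp u = Set.univ ∧ v.card < u.card ∧
      ∀ b ∈ v, S.restrict b u ∈ S.E b}.ncard ≤ 2 ^ v.card - 1 :=
  upward_locally_finite_general S v hfull
end
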